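/- (MAP characterization of the posterior mean.) Assume Γ₀ is Hermitian positive definite and σ² > 0, and let y ∈ ℝ^N. Define the functional J : ℂ^{MN} → ℝ by J(W) = (1/(2σ²))‖y − Re(DW)‖² + Re(Wᴴ Γ₀⁻¹ W), where ‖·‖ is the Euclidean norm on ℝ^N. Then μ = (1/2) Γ₀ Dᴴ C_y⁻¹ y is the unique global minimizer of J: for all W ∈ ℂ^{MN} with W ≠ μ, J(W) > J(μ). -/

import Mathlib

open Matrix
open scoped ComplexOrder

def concatD {N M : ℕ} (Ψ : Fin N → Matrix (Fin N) (Fin M) ℂ) :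
    Matrix (Fin N) (Fin N × Fin M) ℂ :=
  Matrix.of fun k p => Ψ p.1 k p.2

/-!
`J` is a real quadratic functional of `W`, with quadratic part
`V ↦ (1/(2σ²))‖Re(DV)‖² + Re(Vᴴ Γ₀⁻¹ V)`, which is positive definite because `Γ₀⁻¹` is.
Hence `J(μ + V) = J(μ) + (quadratic part of V)` as soon as `μ` solves the normal equation
`Γ₀⁻¹ μ = (1/(2σ²)) Dᴴ (y − Re(Dμ))`. For `μ = ½ Γ₀ Dᴴ u` with `u = C_y⁻¹ y`, the residual is
`y − Re(Dμ) = C_y u − ½ Re(D Γ₀ Dᴴ) u = σ² u`, which is exactly the normal equation.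
-/

namespace Matrix

variable {m n : Type*} [Fintype n]

lemma re_mulVec_ofReal (A : Matrix m n ℂ) (x : n → ℝ) (i : m) :
    ((A *ᵥ fun j => (x j : ℂ)) i).re = (A.map Complex.re *ᵥ x) i := by
  simp [mulVec, dotProduct, Complex.re_sum]

lemma sum_mul_re_mulVec [Fintype m] (D : Matrix m n ℂ) (u : m → ℝ) (V : n → ℂ) :
    ∑ k, u k * ((D *ᵥ V) k).re = (star V ⬝ᵥ (Dᴴ *ᵥ fun k => (u k : ℂ))).re := by
  rw [dotProduct_mulVec, ← star_mulVec, dotProduct, Complex.re_sum]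
  simp [mul_comm]

lemma IsHermitian.re_dotProduct_mulVec_add {G : Matrix n n ℂ} (hG : G.IsHermitian)
    (μ V : n → ℂ) :
    (star (μ + V) ⬝ᵥ (G *ᵥ (μ + V))).re =
      (star μ ⬝ᵥ (G *ᵥ μ)).re + 2 * (star V ⬝ᵥ (G *ᵥ μ)).re + (star V ⬝ᵥ (G *ᵥ V)).re := by
  have hsymm : star μ ⬝ᵥ (G *ᵥ V) = star (star V ⬝ᵥ (G *ᵥ μ)) := by
    rw [star_dotProduct, star_mulVec, hG.eq, ← dotProduct_mulVec]
  simp only [star_add, mulVec_add, add_dotProduct, dotProduct_add, Complex.add_re, hsymm,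
    Complex.star_def, Complex.conj_re]
  ring

lemma PosSemidef.map_re {S : Matrix n n ℂ} (hS : S.PosSemidef) :
    (S.map Complex.re).PosSemidef := by
  refine .of_dotProduct_mulVec_nonneg ?_ fun x => ?_
  · ext i j
    simp [← hS.isHermitian.apply i j]
  · have h := hS.dotProduct_mulVec_nonneg fun j => (x j : ℂ)
    have hre : star x ⬝ᵥ (S.map Complex.re *ᵥ x) =
        (star (fun j => (x j : ℂ)) ⬝ᵥ (S *ᵥ fun j => (x j : ℂ))).re := by
      simp [mulVec, dotProduct, Complex.re_sum, Finset.mul_sum]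
    rw [hre]
    exact (Complex.le_def.mp h).1

end Matrix

variable {m n : Type*} [Fintype m] [Fintype n]

def regularizedLeastSquares (D : Matrix m n ℂ) (G : Matrix n n ℂ) (c : ℝ) (y : m → ℝ)
    (W : n → ℂ) : ℝ :=
  c * ∑ k, (y k - ((D *ᵥ W) k).re) ^ 2 + (star W ⬝ᵥ (G *ᵥ W)).re

section NormalEquation

variable {D : Matrix m n ℂ} {G : Matrix n n ℂ} {c : ℝ} {y : m → ℝ} {μ : n → ℂ}

lemma regularizedLeastSquares_add_of_normalEq (hG : G.IsHermitian)
    (hμ : G *ᵥ μ = (c : ℂ) • Dᴴ *ᵥ fun k => ((y k - ((D *ᵥ μ) k).re : ℝ) : ℂ)) (V : n → ℂ) :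
    regularizedLeastSquares D G c y (μ + V) = regularizedLeastSquares D G c y μ +
      c * ∑ k, ((D *ᵥ V) k).re ^ 2 + (star V ⬝ᵥ (G *ᵥ V)).re := by
  set r : m → ℝ := fun k => y k - ((D *ᵥ μ) k).re
  have hcross : (star V ⬝ᵥ (G *ᵥ μ)).re = c * ∑ k, r k * ((D *ᵥ V) k).re := by
    rw [hμ, dotProduct_smul, smul_eq_mul, Complex.re_ofReal_mul, sum_mul_re_mulVec]
  have hsq : ∑ k, (y k - ((D *ᵥ (μ + V)) k).re) ^ 2 =
      ∑ k, r k ^ 2 - 2 * ∑ k, r k * ((D *ᵥ V) k).re + ∑ k, ((D *ᵥ V) k).re ^ 2 := by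
    simp only [Finset.mul_sum, ← Finset.sum_sub_distrib, ← Finset.sum_add_distrib, mulVec_add,
      Pi.add_apply, Complex.add_re, r]
    exact Finset.sum_congr rfl fun k _ => by ring
  unfold regularizedLeastSquares
  rw [hsq, hG.re_dotProduct_mulVec_add, hcross]
  ring

lemma regularizedLeastSquares_lt_of_normalEq (hG : G.PosDef) (hc : 0 ≤ c)
    (hμ : G *ᵥ μ = (c : ℂ) • Dᴴ *ᵥ fun k => ((y k - ((D *ᵥ μ) k).re : ℝ) : ℂ)) {W : n → ℂ}
    (hW : W ≠ μ) :
    regularizedLeastSquares D G c y μ < regularizedLeastSquares D G c y W := by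
  have hV : W - μ ≠ 0 := sub_ne_zero.mpr hW
  rw [← add_sub_cancel μ W, regularizedLeastSquares_add_of_normalEq hG.isHermitian hμ]
  have hfit : 0 ≤ c * ∑ k, ((D *ᵥ (W - μ)) k).re ^ 2 := by positivity
  have hpen : 0 < (star (W - μ) ⬝ᵥ (G *ᵥ (W - μ))).re :=
    (Complex.lt_def.mp (hG.dotProduct_mulVec_pos hV)).1
  linarith

end NormalEquation

lemma posDef_smul_one_add_smul_map_re [DecidableEq n] {σ a : ℝ} (hσ : 0 < σ) (ha : 0 ≤ a)
    {S : Matrix n n ℂ} (hS : S.PosSemidef) : (σ • 1 + a • S.map Complex.re).PosDef :=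
  (PosDef.one.smul hσ).add_posSemidef (hS.map_re.smul ha)

lemma inv_mulVec_posteriorMean [DecidableEq n] {D : Matrix m n ℂ} {Γ₀ : Matrix n n ℂ}
    (hΓ₀ : IsUnit Γ₀.det) {σ2 : ℝ} (hσ2 : σ2 ≠ 0) [DecidableEq m] {Cy : Matrix m m ℝ}
    (hCy_det : IsUnit Cy.det)
    (hCy : Cy = σ2 • (1 : Matrix m m ℝ) + (1 / 2 : ℝ) • (D * Γ₀ * Dᴴ).map Complex.re)
    (y : m → ℝ) {μ : n → ℂ}
    (hμ : μ = (1 / 2 : ℂ) • (Γ₀ * Dᴴ * Cy⁻¹.map Complex.ofReal) *ᵥ fun k => (y k : ℂ)) :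
    Γ₀⁻¹ *ᵥ μ =
      ((1 / (2 * σ2) : ℝ) : ℂ) • Dᴴ *ᵥ fun k => ((y k - ((D *ᵥ μ) k).re : ℝ) : ℂ) := by
  set u := Cy⁻¹ *ᵥ y
  have hμu : μ = (1 / 2 : ℂ) • Γ₀ *ᵥ Dᴴ *ᵥ fun k => (u k : ℂ) := by
    rw [hμ, ← mulVec_mulVec, ← mulVec_mulVec]
    congr 3
    ext k
    exact (RingHom.map_mulVec Complex.ofRealHom _ _ k).symm
  have hresidual : ∀ k, y k - ((D *ᵥ μ) k).re = σ2 * u k := by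
    intro k
    have hy : y k = (Cy *ᵥ u) k := by
      rw [mulVec_mulVec, mul_nonsing_inv _ hCy_det, one_mulVec]
    have hDμ : ((D *ᵥ μ) k).re = (1 / 2) * (((D * Γ₀ * Dᴴ).map Complex.re) *ᵥ u) k := by
      rw [← re_mulVec_ofReal, hμu, mulVec_smul, mulVec_mulVec, mulVec_mulVec,
        Pi.smul_apply, smul_eq_mul]
      simp
    rw [hy, hDμ, hCy]
    simp [add_mulVec, smul_mulVec]
  have hcancel : Γ₀⁻¹ *ᵥ Γ₀ *ᵥ Dᴴ *ᵥ (fun k => (u k : ℂ)) = Dᴴ *ᵥ fun k => (u k : ℂ) := by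
    rw [mulVec_mulVec, nonsing_inv_mul _ hΓ₀, one_mulVec]
  simp only [hresidual]
  rw [hμu, mulVec_smul, hcancel]
  have hscale : (fun k => ((σ2 * u k : ℝ) : ℂ)) = (σ2 : ℂ) • fun k => (u k : ℂ) := by
    ext k
    simp
  rw [hscale, mulVec_smul, smul_smul]
  congr 1
  push_cast
  field_simp

/-- MAP characterization of the posterior mean: if `Γ₀` is Hermitian positive definite and
`σ² > 0`, then `μ = (1/2) Γ₀ Dᴴ C_y⁻¹ y` is the unique global minimizer of
`J(W) = (1/(2σ²))‖y − Re(DW)‖² + Re(Wᴴ Γ₀⁻¹ W)`. -/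
theorem stmt8 {N M : ℕ} (Ψ : Fin N → Matrix (Fin N) (Fin M) ℂ)
    (Γ₀ : Matrix (Fin N × Fin M) (Fin N × Fin M) ℂ) (hΓ₀ : Γ₀.PosDef)
    (σ2 : ℝ) (hσ2 : 0 < σ2)
    (Cy : Matrix (Fin N) (Fin N) ℝ)
    (hCy : Cy = σ2 • (1 : Matrix (Fin N) (Fin N) ℝ) +
        (1 / 2 : ℝ) • (concatD Ψ * Γ₀ * (concatD Ψ)ᴴ).map Complex.re)
    (y : Fin N → ℝ)
    (J : (Fin N × Fin M → ℂ) → ℝ)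
    (hJ : ∀ W, J W = (1 / (2 * σ2)) * (∑ k, (y k - ((concatD Ψ *ᵥ W) k).re) ^ 2) +
        (star W ⬝ᵥ (Γ₀⁻¹ *ᵥ W)).re)
    (μ : Fin N × Fin M → ℂ)
    (hμ : μ = (1 / 2 : ℂ) • (Γ₀ * (concatD Ψ)ᴴ * Cy⁻¹.map Complex.ofReal) *ᵥ
        (fun k => (y k : ℂ))) :
    ∀ W : Fin N × Fin M → ℂ, W ≠ μ → J μ < J W := by
  intro W hW
  have hCy_pd : Cy.PosDef := hCy ▸ posDef_smul_one_add_smul_map_re hσ2 (by norm_num)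
    (hΓ₀.posSemidef.mul_mul_conjTranspose_same (concatD Ψ))
  have hnormal := inv_mulVec_posteriorMean ((isUnit_iff_isUnit_det _).mp hΓ₀.isUnit) hσ2.ne'
    ((isUnit_iff_isUnit_det _).mp hCy_pd.isUnit) hCy y hμ
  rw [show J = regularizedLeastSquares (concatD Ψ) Γ₀⁻¹ (1 / (2 * σ2)) y from funext hJ]
  exact regularizedLeastSquares_lt_of_normalEq hΓ₀.inv (by positivity) hnormal hW
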